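/- Fix integers g₀ ≥ 1 and g ≥ λ = 2g₀, let M₀ = [[0, Id_{g₀}],[Id_{g₀}, 0]], and let M be the g × g block-diagonal matrix with blocks M₀ and 0. Let τ = (1/2)M + iT with T real symmetric positive definite. Let B be the set of vectors β ∈ {0,1}^g with β_k β_{g₀+k} = 0 for k = 1,…,g₀ and β_j = 0 for j > λ. Then Σ_{β ∈ B} θ(β/2, τ) > 0, where θ(z, τ) = Σ_{m ∈ ℤ^g} exp(πi mᵀ τ m + 2πi mᵀ z). In particular there exists β ∈ B with θ(β/2, τ) > 0. -/

import Mathlib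

open Matrix Finset

/-- The Riemann theta function. -/
noncomputable def theta {g : ℕ} (z : Fin g → ℂ) (τ : Matrix (Fin g) (Fin g) ℂ) : ℂ :=
  ∑' m : Fin g → ℤ,
    Complex.exp (Real.pi * Complex.I *
        ((fun i => (m i : ℂ)) ⬝ᵥ τ.mulVec (fun i => (m i : ℂ))) +
      2 * Real.pi * Complex.I * ((fun i => (m i : ℂ)) ⬝ᵥ z))

/-- The standard orthosymmetric matrix of size `g` with `λ = 2 * l0`. -/
def Mstd (g l0 : ℕ) : Matrix (Fin g) (Fin g) ℤ :=
  Matrix.of fun i j =>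
    if ((i : ℕ) + l0 = (j : ℕ) ∧ (j : ℕ) < 2 * l0) ∨
       ((j : ℕ) + l0 = (i : ℕ) ∧ (i : ℕ) < 2 * l0) then 1 else 0

/-- The set `B` of vectors `β ∈ {0,1}^g` with `β_k β_{g₀+k} = 0` for `k < g₀`
and `β_j = 0` for `j ≥ 2 g₀`. -/
def Bset (g g0 : ℕ) (hg : 2 * g0 ≤ g) : Finset (Fin g → Fin 2) :=
  Finset.univ.filter fun β =>
    (∀ k : Fin g0,
      ((β ⟨(k : ℕ), by have := k.isLt; omega⟩ : ℕ)) *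
        ((β ⟨g0 + (k : ℕ), by have := k.isLt; omega⟩ : ℕ)) = 0) ∧
    ∀ j : Fin g, 2 * g0 ≤ (j : ℕ) → β j = 0

namespace Stmt10Aux


def extZ (g : ℕ) (m : Fin g → ℤ) : ℕ → ℤ := fun n => if h : n < g then m ⟨n, h⟩ else 0

lemma sum_fin_eq_range {R : Type*} [AddCommMonoid R] (g : ℕ) (c : Fin g → R) (F : ℕ → R)
    (hF : ∀ (n : ℕ) (h : n < g), c ⟨n, h⟩ = F n) :
    ∑ j : Fin g, c j = ∑ n ∈ Finset.range g, F n := by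
  rw [← Fin.sum_univ_eq_sum_range F g]
  exact Finset.sum_congr rfl fun i _ => hF i.1 i.2

def SZ (g g0 : ℕ) (m : Fin g → ℤ) : ℤ :=
  ∑ k ∈ Finset.range g0, extZ g m k * extZ g m (g0 + k)

lemma mstd_row (g0 g : ℕ) (hg0 : 1 ≤ g0) (hg : 2 * g0 ≤ g) (m : Fin g → ℤ) (i : Fin g) :
    (Mstd g g0).mulVec m i
      = (if (i : ℕ) + g0 < 2 * g0 then extZ g m ((i : ℕ) + g0) else 0)
        + (if g0 ≤ (i : ℕ) ∧ (i : ℕ) < 2 * g0 then extZ g m ((i : ℕ) - g0) else 0) := by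
  have hsplit : ∀ j : Fin g, Mstd g g0 i j * m j
      = (if ((i : ℕ) + g0 = (j : ℕ) ∧ (j : ℕ) < 2 * g0) then m j else 0)
        + (if ((j : ℕ) + g0 = (i : ℕ) ∧ (i : ℕ) < 2 * g0) then m j else 0) := by
    intro j
    simp only [Mstd, Matrix.of_apply]
    by_cases h1 : ((i : ℕ) + g0 = (j : ℕ) ∧ (j : ℕ) < 2 * g0) <;>
      by_cases h2 : ((j : ℕ) + g0 = (i : ℕ) ∧ (i : ℕ) < 2 * g0)
    · omega
    · simp [h1, h2]
    · simp [h1, h2]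
    · simp [h1, h2]
  rw [Matrix.mulVec, dotProduct, Finset.sum_congr rfl fun j _ => hsplit j,
    Finset.sum_add_distrib]
  congr 1
  · by_cases hi : (i : ℕ) + g0 < 2 * g0
    · have hlt : (i : ℕ) + g0 < g := by omega
      rw [if_pos hi, Finset.sum_eq_single (⟨(i : ℕ) + g0, hlt⟩ : Fin g)]
      · rw [if_pos ⟨rfl, hi⟩, extZ, dif_pos hlt]
      · intro j _ hj
        rw [if_neg]
        rintro ⟨h1, -⟩
        exact hj (Fin.ext h1.symm)
      · intro h; exact absurd (Finset.mem_univ _) h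
    · rw [if_neg hi, Finset.sum_eq_zero]
      intro j _
      rw [if_neg]
      rintro ⟨h1, h2⟩
      omega
  · by_cases hi : g0 ≤ (i : ℕ) ∧ (i : ℕ) < 2 * g0
    · have hlt : (i : ℕ) - g0 < g := by omega
      rw [if_pos hi, Finset.sum_eq_single (⟨(i : ℕ) - g0, hlt⟩ : Fin g)]
      · rw [if_pos ⟨by simp; omega, hi.2⟩, extZ, dif_pos hlt]
      · intro j _ hj
        rw [if_neg]
        rintro ⟨h1, -⟩
        exact hj (Fin.ext (by simp; omega))
      · intro h; exact absurd (Finset.mem_univ _) h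
    · rw [if_neg hi, Finset.sum_eq_zero]
      intro j _
      rw [if_neg]
      rintro ⟨h1, h2⟩
      omega

lemma mstd_quad (g0 g : ℕ) (hg0 : 1 ≤ g0) (hg : 2 * g0 ≤ g) (m : Fin g → ℤ) :
    m ⬝ᵥ (Mstd g g0).mulVec m = 2 * SZ g g0 m := by
  rw [dotProduct, Finset.sum_congr rfl fun i _ => by rw [mstd_row g0 g hg0 hg m i]]
  simp_rw [mul_add]
  rw [Finset.sum_add_distrib]
  have hA : (∑ i : Fin g, m i * (if (i : ℕ) + g0 < 2 * g0 then extZ g m ((i : ℕ) + g0) else 0))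
      = SZ g g0 m := by
    rw [sum_fin_eq_range g _
        (fun n => extZ g m n * (if n + g0 < 2 * g0 then extZ g m (n + g0) else 0))
        (fun n h => by simp only [extZ]; rw [dif_pos h])]
    rw [← Finset.sum_subset (Finset.range_subset_range.2 (by omega) : range g0 ⊆ range g)
        (fun n hn hn' => by
          rw [if_neg (by simp at hn hn' ⊢; omega), mul_zero])]
    refine Finset.sum_congr rfl fun n hn => ?_
    simp only [Finset.mem_range] at hn
    rw [if_pos (by omega), Nat.add_comm n g0]
  have hB : (∑ i : Fin g,
        m i * (if g0 ≤ (i : ℕ) ∧ (i : ℕ) < 2 * g0 then extZ g m ((i : ℕ) - g0) else 0))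
      = SZ g g0 m := by
    rw [sum_fin_eq_range g _
        (fun n => extZ g m n * (if g0 ≤ n ∧ n < 2 * g0 then extZ g m (n - g0) else 0))
        (fun n h => by simp only [extZ]; rw [dif_pos h])]
    rw [← Finset.sum_subset
        (by intro n hn; simp only [Finset.mem_Ico, Finset.mem_range] at hn ⊢; omega :
          Finset.Ico g0 (2 * g0) ⊆ range g)
        (fun n hn hn' => by
          rw [if_neg (by simp at hn hn' ⊢; omega), mul_zero])]
    rw [Finset.sum_Ico_eq_sum_range]
    have h2 : 2 * g0 - g0 = g0 := by omega
    rw [h2]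
    refine Finset.sum_congr rfl fun n hn => ?_
    simp only [Finset.mem_range] at hn
    rw [if_pos (by omega)]
    have h3 : g0 + n - g0 = n := by omega
    rw [h3, mul_comm]
  rw [hA, hB, SZ, two_mul]

def DZ (g : ℕ) (m : Fin g → ℤ) (β : Fin g → Fin 2) : ℤ :=
  ∑ j : Fin g, m j * ((β j : ℕ) : ℤ)

variable {g0 g : ℕ}

/-- encode a choice function into a vector in `Bset`. -/
def emb (hg : 2 * g0 ≤ g) (p : Fin g0 → Fin 3) : Fin g → Fin 2 := fun j =>
  if h : (j : ℕ) < g0 then (if p ⟨j, h⟩ = 1 then 1 else 0)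
  else if h2 : (j : ℕ) < 2 * g0 then (if p ⟨(j : ℕ) - g0, by omega⟩ = 2 then 1 else 0)
  else 0

def binv (hg : 2 * g0 ≤ g) (β : Fin g → Fin 2) : Fin g0 → Fin 3 := fun k =>
  if β ⟨(k : ℕ), by have := k.isLt; omega⟩ = 1 then 1
  else if β ⟨g0 + (k : ℕ), by have := k.isLt; omega⟩ = 1 then 2 else 0

lemma emb_lo (hg : 2 * g0 ≤ g) (p : Fin g0 → Fin 3) {n : ℕ} (h : n < g0) (h' : n < g) :
    emb hg p ⟨n, h'⟩ = if p ⟨n, h⟩ = 1 then 1 else 0 := by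
  simp only [emb]
  rw [dif_pos h]

lemma emb_mid (hg : 2 * g0 ≤ g) (p : Fin g0 → Fin 3) {n : ℕ} (h : n < g0) (h' : g0 + n < g) :
    emb hg p ⟨g0 + n, h'⟩ = if p ⟨n, h⟩ = 2 then 1 else 0 := by
  simp only [emb]
  rw [dif_neg (by omega), dif_pos (by omega : g0 + n < 2 * g0)]
  simp only [show g0 + n - g0 = n from by omega]

lemma emb_hi(hg : 2 * g0 ≤ g) (p : Fin g0 → Fin 3) {n : ℕ} (h : 2 * g0 ≤ n) (h' : n < g) :
    emb hg p ⟨n, h'⟩ = 0 := by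
  simp only [emb]
  rw [dif_neg (by omega), dif_neg (by omega)]

lemma emb_mem (hg : 2 * g0 ≤ g) (p : Fin g0 → Fin 3) : emb hg p ∈ Bset g g0 hg := by
  rw [Bset, Finset.mem_filter]
  refine ⟨Finset.mem_univ _, fun k => ?_, fun j hj => ?_⟩
  · rw [emb_lo hg p k.isLt, emb_mid hg p k.isLt]
    exact (by decide : ∀ t : Fin 3,
      (((if t = 1 then (1 : Fin 2) else 0) : Fin 2) : ℕ) *
        (((if t = 2 then (1 : Fin 2) else 0) : Fin 2) : ℕ) = 0) (p ⟨(k : ℕ), k.isLt⟩)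
  · have : j = ⟨(j : ℕ), j.isLt⟩ := rfl
    rw [this, emb_hi hg p hj]

lemma binv_emb (hg : 2 * g0 ≤ g) (p : Fin g0 → Fin 3) : binv hg (emb hg p) = p := by
  funext k
  simp only [binv]
  rw [emb_lo hg p k.isLt, emb_mid hg p k.isLt]
  exact (by decide : ∀ t : Fin 3,
    (if (if t = 1 then (1 : Fin 2) else 0) = 1 then (1 : Fin 3)
      else if (if t = 2 then (1 : Fin 2) else 0) = 1 then 2 else 0) = t) (p ⟨(k : ℕ), k.isLt⟩)

lemma point1 : ∀ a b : Fin 2,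
    (if (if a = 1 then (1 : Fin 3) else if b = 1 then 2 else 0) = 1 then (1 : Fin 2) else 0)
      = a := by decide

lemma point2 : ∀ a b : Fin 2, (a : ℕ) * (b : ℕ) = 0 →
    (if (if a = 1 then (1 : Fin 3) else if b = 1 then 2 else 0) = 2 then (1 : Fin 2) else 0)
      = b := by decide

lemma emb_binv (hg : 2 * g0 ≤ g) (β : Fin g → Fin 2) (hβ : β ∈ Bset g g0 hg) :
    emb hg (binv hg β) = β := by
  rw [Bset, Finset.mem_filter] at hβ
  obtain ⟨-, h1, h2⟩ := hβ
  funext j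
  by_cases hj1 : (j : ℕ) < g0
  · have hj : j = ⟨(j : ℕ), j.isLt⟩ := rfl
    rw [hj, emb_lo hg _ hj1]
    exact point1 (β ⟨(j : ℕ), j.isLt⟩) (β ⟨g0 + (j : ℕ), by omega⟩)
  · by_cases hj2 : (j : ℕ) < 2 * g0
    · have hng : (j : ℕ) - g0 < g0 := by omega
      have hj : j = ⟨g0 + ((j : ℕ) - g0), by omega⟩ := Fin.ext (by simp; omega)
      rw [hj, emb_mid hg _ hng]
      exact point2 (β ⟨(j : ℕ) - g0, by omega⟩) (β ⟨g0 + ((j : ℕ) - g0), by omega⟩)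
        (h1 ⟨(j : ℕ) - g0, hng⟩)
    · have hj : j = ⟨(j : ℕ), j.isLt⟩ := rfl
      rw [hj, emb_hi hg _ (by omega), ← hj]
      exact (h2 j (by omega)).symm

def e1 (t : Fin 3) : ℤ := if t = 1 then 1 else 0
def e2 (t : Fin 3) : ℤ := if t = 2 then 1 else 0

lemma zpow_neg_one_sum {ι : Type*} (s : Finset ι) (f : ι → ℤ) :
    (-1 : ℝ) ^ (∑ i ∈ s, f i) = ∏ i ∈ s, (-1 : ℝ) ^ (f i) := by
  classical
  induction s using Finset.induction_on with
  | empty => simp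
  | insert _ _ h ih => rw [Finset.sum_insert h, Finset.prod_insert h,
      zpow_add₀ (by norm_num : (-1:ℝ) ≠ 0), ih]

lemma parity3 (a b : ℤ) :
    (1 : ℝ) ≤ (-1 : ℝ) ^ (a * b) + (-1 : ℝ) ^ (a * b + a) + (-1 : ℝ) ^ (a * b + b) := by
  rcases Int.even_or_odd a with ha | ha <;> rcases Int.even_or_odd b with hb | hb
  · rw [(ha.mul_right b).neg_one_zpow, ((ha.mul_right b).add ha).neg_one_zpow,
      ((ha.mul_right b).add hb).neg_one_zpow]; norm_num
  · rw [(ha.mul_right b).neg_one_zpow, ((ha.mul_right b).add ha).neg_one_zpow,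
      ((ha.mul_right b).add_odd hb).neg_one_zpow]; norm_num
  · rw [(hb.mul_left a).neg_one_zpow, ((hb.mul_left a).add_odd ha).neg_one_zpow,
      ((hb.mul_left a).add hb).neg_one_zpow]; norm_num
  · rw [(ha.mul hb).neg_one_zpow, ((ha.mul hb).add_odd ha).neg_one_zpow,
      ((ha.mul hb).add_odd hb).neg_one_zpow]; norm_num

lemma factor_ge_one (a b : ℤ) :
    (1 : ℝ) ≤ ∑ t : Fin 3, (-1 : ℝ) ^ (a * b + a * e1 t + b * e2 t) := by
  rw [Fin.sum_univ_three,
    show e1 0 = 0 from by decide, show e1 1 = 1 from by decide, show e1 2 = 0 from by decide,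
    show e2 0 = 0 from by decide, show e2 1 = 0 from by decide, show e2 2 = 1 from by decide]
  simpa using parity3 a b

def embN (hg : 2 * g0 ≤ g) (p : Fin g0 → Fin 3) : ℕ → ℤ := fun n =>
  if h : n < g then ((emb hg p ⟨n, h⟩ : ℕ) : ℤ) else 0

lemma embN_lo (hg : 2 * g0 ≤ g) (p : Fin g0 → Fin 3) {n : ℕ} (h : n < g0) :
    embN hg p n = e1 (p ⟨n, h⟩) := by
  simp only [embN]
  rw [dif_pos (by omega : n < g), emb_lo hg p h]
  by_cases hp : p ⟨n, h⟩ = 1 <;> simp [hp, e1]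

lemma embN_mid (hg : 2 * g0 ≤ g) (p : Fin g0 → Fin 3) {n : ℕ} (h : n < g0) :
    embN hg p (g0 + n) = e2 (p ⟨n, h⟩) := by
  simp only [embN]
  rw [dif_pos (by omega : g0 + n < g), emb_mid hg p h]
  by_cases hp : p ⟨n, h⟩ = 2 <;> simp [hp, e2]

lemma embN_hi (hg : 2 * g0 ≤ g) (p : Fin g0 → Fin 3) {n : ℕ} (h : 2 * g0 ≤ n) :
    embN hg p n = 0 := by
  simp only [embN]
  by_cases hn : n < g
  · rw [dif_pos hn, emb_hi hg p h]; rfl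
  · rw [dif_neg hn]

lemma sz_fin (m : Fin g → ℤ) :
    SZ g g0 m = ∑ k : Fin g0, extZ g m (k : ℕ) * extZ g m (g0 + (k : ℕ)) :=
  (sum_fin_eq_range g0 _ (fun n => extZ g m n * extZ g m (g0 + n)) (fun n h => rfl)).symm

lemma dz_emb (hg : 2 * g0 ≤ g) (m : Fin g → ℤ) (p : Fin g0 → Fin 3) :
    DZ g m (emb hg p)
      = ∑ k : Fin g0, (extZ g m (k : ℕ) * e1 (p k) + extZ g m (g0 + (k : ℕ)) * e2 (p k)) := by
  rw [DZ, sum_fin_eq_range g _ (fun n => extZ g m n * embN hg p n)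
      (fun n h => by simp only [extZ, embN]; rw [dif_pos h, dif_pos h])]
  rw [← Finset.sum_subset (Finset.range_subset_range.2 (by omega) : range (2 * g0) ⊆ range g)
      (fun n hn hn' => by
        simp only [Finset.mem_range] at hn hn'
        rw [embN_hi hg p (by omega), mul_zero])]
  rw [Finset.range_eq_Ico, ← Finset.sum_Ico_consecutive _ (by omega : 0 ≤ g0)
      (by omega : g0 ≤ 2 * g0), ← Finset.range_eq_Ico, Finset.sum_Ico_eq_sum_range,
    show 2 * g0 - g0 = g0 from by omega, ← Finset.sum_add_distrib]
  rw [sum_fin_eq_range g0 _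
      (fun n => extZ g m n * embN hg p n + extZ g m (g0 + n) * embN hg p (g0 + n))
      (fun n h => by
        show _ = extZ g m n * embN hg p n + extZ g m (g0 + n) * embN hg p (g0 + n)
        rw [embN_lo hg p h, embN_mid hg p h])]

lemma weight_ge_one (hg0 : 1 ≤ g0) (hg : 2 * g0 ≤ g) (m : Fin g → ℤ) :
    (1 : ℝ) ≤ ∑ β ∈ Bset g g0 hg, (-1 : ℝ) ^ (SZ g g0 m + DZ g m β) := by
  have hbij : ∑ β ∈ Bset g g0 hg, (-1 : ℝ) ^ (SZ g g0 m + DZ g m β)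
      = ∑ p : Fin g0 → Fin 3, (-1 : ℝ) ^ (SZ g g0 m + DZ g m (emb hg p)) :=
    (Finset.sum_nbij' (emb hg) (binv hg) (fun p _ => emb_mem hg p)
      (fun β _ => Finset.mem_univ _) (fun p _ => binv_emb hg p)
      (fun β hβ => emb_binv hg β hβ) (fun p _ => rfl)).symm
  rw [hbij]
  calc (1 : ℝ)
      ≤ ∏ k : Fin g0, ∑ t : Fin 3, (-1 : ℝ) ^ (extZ g m (k : ℕ) * extZ g m (g0 + (k : ℕ))
          + extZ g m (k : ℕ) * e1 t + extZ g m (g0 + (k : ℕ)) * e2 t) := by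
        calc (1 : ℝ) = ∏ _k : Fin g0, (1 : ℝ) := Finset.prod_const_one.symm
        _ ≤ _ := Finset.prod_le_prod (fun i _ => zero_le_one) (fun i _ => factor_ge_one _ _)
    _ = ∑ p : Fin g0 → Fin 3, ∏ k : Fin g0, (-1 : ℝ) ^ (extZ g m (k : ℕ) * extZ g m (g0 + (k : ℕ))
          + extZ g m (k : ℕ) * e1 (p k) + extZ g m (g0 + (k : ℕ)) * e2 (p k)) := by
        rw [Finset.prod_univ_sum, Fintype.piFinset_univ]
    _ = ∑ p : Fin g0 → Fin 3, (-1 : ℝ) ^ (SZ g g0 m + DZ g m (emb hg p)) := by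
        refine Finset.sum_congr rfl fun p _ => ?_
        rw [sz_fin, dz_emb hg m p, ← Finset.sum_add_distrib, zpow_neg_one_sum]
        exact Finset.prod_congr rfl fun k _ => by rw [add_assoc]

open Real

lemma quad_smul (g : ℕ) (T : Matrix (Fin g) (Fin g) ℝ) (a : ℝ) (v : Fin g → ℝ) :
    (a • v) ⬝ᵥ T.mulVec (a • v) = a ^ 2 * (v ⬝ᵥ T.mulVec v) := by
  rw [Matrix.mulVec_smul, dotProduct_smul, smul_dotProduct]
  simp only [smul_eq_mul]
  ring

lemma posdef_bound (g : ℕ) (hgpos : 0 < g) (T : Matrix (Fin g) (Fin g) ℝ) (hT : T.PosDef) :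
    ∃ c : ℝ, 0 < c ∧ ∀ v : Fin g → ℝ, c * (∑ i, v i ^ 2) ≤ v ⬝ᵥ T.mulVec v := by
  have hne : Nonempty (Fin g) := ⟨⟨0, hgpos⟩⟩
  have hcont : Continuous fun v : Fin g → ℝ => v ⬝ᵥ T.mulVec v := by
    show Continuous fun v : Fin g → ℝ => ∑ i, v i * ∑ j, T i j * v j
    exact continuous_finset_sum _ fun i _ => (continuous_apply i).mul
      (continuous_finset_sum _ fun j _ => continuous_const.mul (continuous_apply j))
  have hx0 : (fun _ => (1 : ℝ)) ∈ Metric.sphere (0 : Fin g → ℝ) 1 := by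
    rw [mem_sphere_zero_iff_norm, pi_norm_const]
    exact norm_one
  obtain ⟨u, hu_mem, hu_min⟩ := (isCompact_sphere (0 : Fin g → ℝ) 1).exists_isMinOn
    ⟨_, hx0⟩ hcont.continuousOn
  have hu_norm : ‖u‖ = 1 := mem_sphere_zero_iff_norm.1 hu_mem
  have hu_ne : u ≠ 0 := fun h => by simp [h] at hu_norm
  have hc' : 0 < u ⬝ᵥ T.mulVec u := by
    have := hT.dotProduct_mulVec_pos hu_ne
    simpa using this
  refine ⟨(u ⬝ᵥ T.mulVec u) / g, by positivity, fun v => ?_⟩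
  by_cases hv : v = 0
  · subst hv
    simp
  · have hnv : 0 < ‖v‖ := norm_pos_iff.2 hv
    set u' : Fin g → ℝ := ‖v‖⁻¹ • v with hu'def
    have hu'mem : u' ∈ Metric.sphere (0 : Fin g → ℝ) 1 := by
      rw [mem_sphere_zero_iff_norm, hu'def, norm_smul, norm_inv, norm_norm]
      field_simp
    have hv_eq : v = ‖v‖ • u' := by
      rw [hu'def, smul_smul, mul_inv_cancel₀ hnv.ne', one_smul]
    have hfv : v ⬝ᵥ T.mulVec v = ‖v‖ ^ 2 * (u' ⬝ᵥ T.mulVec u') := by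
      conv_lhs => rw [hv_eq]
      exact quad_smul g T _ u'
    have hmin : u ⬝ᵥ T.mulVec u ≤ u' ⬝ᵥ T.mulVec u' := hu_min hu'mem
    have hsum : (∑ i, v i ^ 2) ≤ g * ‖v‖ ^ 2 := by
      calc (∑ i, v i ^ 2) ≤ ∑ _i : Fin g, ‖v‖ ^ 2 := by
            refine Finset.sum_le_sum fun i _ => ?_
            have h1 : |v i| ≤ ‖v‖ := by
              have := norm_le_pi_norm v i
              simpa [Real.norm_eq_abs] using this
            calc v i ^ 2 = |v i| ^ 2 := (sq_abs _).symm
            _ ≤ ‖v‖ ^ 2 := pow_le_pow_left₀ (abs_nonneg _) h1 2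
        _ = g * ‖v‖ ^ 2 := by simp [Finset.sum_const, Finset.card_univ]
    have hgr : (0 : ℝ) < g := by exact_mod_cast hgpos
    calc (u ⬝ᵥ T.mulVec u) / g * (∑ i, v i ^ 2)
        ≤ (u ⬝ᵥ T.mulVec u) / g * (g * ‖v‖ ^ 2) := by
          exact mul_le_mul_of_nonneg_left hsum (by positivity)
      _ = (u ⬝ᵥ T.mulVec u) * ‖v‖ ^ 2 := by field_simp
      _ ≤ (u' ⬝ᵥ T.mulVec u') * ‖v‖ ^ 2 := by
          exact mul_le_mul_of_nonneg_right hmin (by positivity)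
      _ = v ⬝ᵥ T.mulVec v := by rw [hfv]; ring

lemma summable_exp_neg_nat_sq (a : ℝ) (ha : 0 < a) :
    Summable fun n : ℕ => rexp (-a * (n : ℝ) ^ 2) := by
  refine Summable.of_nonneg_of_le (fun n => (exp_pos _).le) (fun n => ?_)
    (summable_geometric_of_lt_one (exp_nonneg (-a)) (exp_lt_one_iff.2 (neg_neg_iff_pos.2 ha)))
  rw [← Real.exp_nat_mul]
  refine Real.exp_le_exp.2 ?_
  have h1 : (n : ℝ) ≤ (n : ℝ) ^ 2 := by exact_mod_cast Nat.le_self_pow two_ne_zero n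
  nlinarith

lemma summable_exp_neg_int_sq (a : ℝ) (ha : 0 < a) :
    Summable fun k : ℤ => rexp (-a * (k : ℝ) ^ 2) := by
  have key := summable_exp_neg_nat_sq a ha
  refine Summable.of_nat_of_neg ?_ ?_
  · simpa using key
  · refine key.congr fun n => ?_
    push_cast
    ring_nf

lemma summable_gauss (a : ℝ) (ha : 0 < a) (g : ℕ) :
    Summable fun v : Fin g → ℤ => rexp (-a * ∑ i, ((v i : ℝ)) ^ 2) := by
  induction g with
  | zero =>
      haveI : Subsingleton (Fin 0 → ℤ) := ⟨fun f g => funext fun i => absurd i.2 (by omega)⟩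
      haveI : Finite (Fin 0 → ℤ) := Finite.of_subsingleton
      exact Summable.of_finite
  | succ n ih =>
      have h2 : Summable (fun q : ℤ × (Fin n → ℤ) =>
          rexp (-a * (q.1 : ℝ) ^ 2) * rexp (-a * ∑ i, ((q.2 i : ℝ)) ^ 2)) :=
        (summable_exp_neg_int_sq a ha).mul_of_nonneg ih
          (fun _ => (exp_pos _).le) (fun _ => (exp_pos _).le)
      have h3 := (Fin.consEquiv fun _ : Fin (n + 1) => ℤ).symm.summable_iff.2 h2
      refine h3.congr fun v => ?_
      show rexp (-a * ((v 0 : ℝ)) ^ 2) * rexp (-a * ∑ i : Fin n, ((v i.succ : ℝ)) ^ 2) = _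
      rw [← Real.exp_add, Fin.sum_univ_succ]
      congr 1
      ring

lemma summable_quad (g : ℕ) (hgpos : 0 < g) (T : Matrix (Fin g) (Fin g) ℝ) (hT : T.PosDef) :
    Summable fun m : Fin g → ℤ =>
      rexp (-π * ((fun i => (m i : ℝ)) ⬝ᵥ T.mulVec (fun i => (m i : ℝ)))) := by
  obtain ⟨c, hc, hbound⟩ := posdef_bound g hgpos T hT
  refine Summable.of_nonneg_of_le (fun _ => (exp_pos _).le) (fun m => ?_)
    (summable_gauss (π * c) (by positivity) g)
  refine Real.exp_le_exp.2 ?_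
  have h1 := hbound fun i => ((m i : ℝ))
  nlinarith [Real.pi_pos, mul_le_mul_of_nonneg_left h1 Real.pi_pos.le]


open Real in
def Qr (g : ℕ) (T : Matrix (Fin g) (Fin g) ℝ) (m : Fin g → ℤ) : ℝ :=
  (fun i => (m i : ℝ)) ⬝ᵥ T.mulVec (fun i => (m i : ℝ))

open Real in
lemma summable_quad' (g : ℕ) (hgpos : 0 < g) (T : Matrix (Fin g) (Fin g) ℝ)
    (hT : T.PosDef) : Summable fun m : Fin g → ℤ => rexp (-π * Qr g T m) :=
  summable_quad g hgpos T hT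

open Real Complex in
lemma term_eq (g0 g : ℕ) (hg0 : 1 ≤ g0) (hg : 2 * g0 ≤ g)
    (T : Matrix (Fin g) (Fin g) ℝ) (τ : Matrix (Fin g) (Fin g) ℂ)
    (hτ : τ = (1 / 2 : ℂ) • (Mstd g g0).map (fun n : ℤ => (n : ℂ)) +
      Complex.I • T.map (fun t : ℝ => (t : ℂ)))
    (β : Fin g → Fin 2) (m : Fin g → ℤ) :
    Complex.exp (Real.pi * Complex.I *
        ((fun i => (m i : ℂ)) ⬝ᵥ τ.mulVec (fun i => (m i : ℂ))) +
      2 * Real.pi * Complex.I *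
        ((fun i => (m i : ℂ)) ⬝ᵥ (fun i => ((β i : ℕ) : ℂ) / 2)))
    = (((-1 : ℝ) ^ (SZ g g0 m + DZ g m β) * rexp (-Real.pi * Qr g T m) : ℝ) : ℂ) := by
  subst hτ
  have hM : (fun i => (m i : ℂ)) ⬝ᵥ
      ((Mstd g g0).map (fun n : ℤ => (n : ℂ))).mulVec (fun i => (m i : ℂ))
      = ((2 * SZ g g0 m : ℤ) : ℂ) := by
    rw [← mstd_quad g0 g hg0 hg m]
    simp only [dotProduct, Matrix.mulVec, Matrix.map_apply]
    push_cast
    rfl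
  have hT' : (fun i => (m i : ℂ)) ⬝ᵥ
      (T.map (fun t : ℝ => (t : ℂ))).mulVec (fun i => (m i : ℂ))
      = ((Qr g T m : ℝ) : ℂ) := by
    rw [Qr]
    simp only [dotProduct, Matrix.mulVec, Matrix.map_apply]
    push_cast
    rfl
  have hz : (fun i => (m i : ℂ)) ⬝ᵥ (fun i => ((β i : ℕ) : ℂ) / 2)
      = ((DZ g m β : ℤ) : ℂ) / 2 := by
    rw [DZ]
    simp only [dotProduct]
    push_cast
    rw [Finset.sum_div]
    exact Finset.sum_congr rfl fun i _ => by ring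
  have hsplit : (fun i => (m i : ℂ)) ⬝ᵥ
      (((1 / 2 : ℂ) • (Mstd g g0).map (fun n : ℤ => (n : ℂ)) +
        Complex.I • T.map (fun t : ℝ => (t : ℂ)))).mulVec (fun i => (m i : ℂ))
      = (1 / 2 : ℂ) * ((2 * SZ g g0 m : ℤ) : ℂ) + Complex.I * ((Qr g T m : ℝ) : ℂ) := by
    rw [Matrix.add_mulVec, dotProduct_add, Matrix.smul_mulVec,
      Matrix.smul_mulVec, dotProduct_smul, dotProduct_smul, smul_eq_mul,
      smul_eq_mul, hM, hT']
  rw [hsplit, hz]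
  have hexp : Real.pi * Complex.I *
        ((1 / 2 : ℂ) * ((2 * SZ g g0 m : ℤ) : ℂ) + Complex.I * ((Qr g T m : ℝ) : ℂ)) +
      2 * Real.pi * Complex.I * (((DZ g m β : ℤ) : ℂ) / 2)
      = ((-Real.pi * Qr g T m : ℝ) : ℂ) + ((SZ g g0 m + DZ g m β : ℤ) : ℂ) *
        (Real.pi * Complex.I) := by
    push_cast
    linear_combination (Real.pi * (Qr g T m : ℂ)) * Complex.I_sq
  rw [hexp, Complex.exp_add, Complex.exp_int_mul, Complex.exp_pi_mul_I]
  rw [← Complex.ofReal_exp]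
  push_cast
  ring

open Real in
lemma neg_one_zpow_le_one (k : ℤ) : (-1 : ℝ) ^ k ≤ 1 := by
  rcases Int.even_or_odd k with h | h
  · rw [h.neg_one_zpow]
  · rw [h.neg_one_zpow]; norm_num

lemma neg_one_zpow_abs (k : ℤ) : |(-1 : ℝ) ^ k| = 1 := by
  rcases Int.even_or_odd k with h | h
  · rw [h.neg_one_zpow, abs_one]
  · rw [h.neg_one_zpow, abs_neg, abs_one]

end Stmt10Aux

open Stmt10Aux Real

theorem stmt10 (g0 g : ℕ) (hg0 : 1 ≤ g0) (hg : 2 * g0 ≤ g)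
    (T : Matrix (Fin g) (Fin g) ℝ) (hT : T.IsSymm) (hTpos : T.PosDef)
    (τ : Matrix (Fin g) (Fin g) ℂ)
    (hτ : τ = (1 / 2 : ℂ) • (Mstd g g0).map (fun n : ℤ => (n : ℂ)) +
      Complex.I • T.map (fun t : ℝ => (t : ℂ))) :
    ((∑ β ∈ Bset g g0 hg, theta (fun i => ((β i : ℕ) : ℂ) / 2) τ).im = 0 ∧
      0 < (∑ β ∈ Bset g g0 hg, theta (fun i => ((β i : ℕ) : ℂ) / 2) τ).re) ∧
    ∃ β ∈ Bset g g0 hg,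
      (theta (fun i => ((β i : ℕ) : ℂ) / 2) τ).im = 0 ∧
      0 < (theta (fun i => ((β i : ℕ) : ℂ) / 2) τ).re := by
  have hgpos : 0 < g := by omega
  set f : (Fin g → Fin 2) → (Fin g → ℤ) → ℝ :=
    fun β m => (-1 : ℝ) ^ (SZ g g0 m + DZ g m β) * rexp (-Real.pi * Qr g T m) with hf
  have hsumQ : Summable fun m : Fin g → ℤ => rexp (-Real.pi * Qr g T m) :=
    summable_quad' g hgpos T hTpos
  have hsumf : ∀ β, Summable (f β) := by
    intro β
    refine Summable.of_abs (hsumQ.congr fun m => ?_)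
    rw [hf]
    rw [abs_mul, neg_one_zpow_abs, one_mul, abs_of_pos (Real.exp_pos _)]
  have htheta : ∀ β, theta (fun i => ((β i : ℕ) : ℂ) / 2) τ = ((∑' m, f β m : ℝ) : ℂ) := by
    intro β
    rw [theta, Complex.ofReal_tsum]
    exact tsum_congr fun m => term_eq g0 g hg0 hg T τ hτ β m
  have hw := weight_ge_one (g0 := g0) (g := g) hg0 hg
  have hkey : ∀ m, rexp (-Real.pi * Qr g T m) ≤ ∑ β ∈ Bset g g0 hg, f β m := by
    intro m
    calc rexp (-Real.pi * Qr g T m) = 1 * rexp (-Real.pi * Qr g T m) := (one_mul _).symm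
      _ ≤ (∑ β ∈ Bset g g0 hg, (-1 : ℝ) ^ (SZ g g0 m + DZ g m β)) *
          rexp (-Real.pi * Qr g T m) :=
        mul_le_mul_of_nonneg_right (hw m) (Real.exp_pos _).le
      _ = ∑ β ∈ Bset g g0 hg, f β m := by rw [Finset.sum_mul]
  have hnn : ∀ m, 0 ≤ ∑ β ∈ Bset g g0 hg, f β m :=
    fun m => (Real.exp_pos _).le.trans (hkey m)
  have hub : ∀ m, ∑ β ∈ Bset g g0 hg, f β m
      ≤ ((Bset g g0 hg).card : ℝ) * rexp (-Real.pi * Qr g T m) := by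
    intro m
    calc ∑ β ∈ Bset g g0 hg, f β m
        ≤ ∑ _β ∈ Bset g g0 hg, rexp (-Real.pi * Qr g T m) := by
          refine Finset.sum_le_sum fun β _ => ?_
          rw [hf]
          calc (-1 : ℝ) ^ (SZ g g0 m + DZ g m β) * rexp (-Real.pi * Qr g T m)
              ≤ 1 * rexp (-Real.pi * Qr g T m) :=
                mul_le_mul_of_nonneg_right (neg_one_zpow_le_one _) (Real.exp_pos _).le
            _ = rexp (-Real.pi * Qr g T m) := one_mul _
      _ = ((Bset g g0 hg).card : ℝ) * rexp (-Real.pi * Qr g T m) := by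
          rw [Finset.sum_const, nsmul_eq_mul]
  have hFsum : Summable fun m : Fin g → ℤ => ∑ β ∈ Bset g g0 hg, f β m :=
    Summable.of_nonneg_of_le hnn hub (hsumQ.mul_left _)
  have hswap : ∑ β ∈ Bset g g0 hg, ∑' m, f β m
      = ∑' m : Fin g → ℤ, ∑ β ∈ Bset g g0 hg, f β m :=
    (Summable.tsum_finsetSum fun β _ => hsumf β).symm
  have hpos : 0 < ∑' m : Fin g → ℤ, ∑ β ∈ Bset g g0 hg, f β m :=
    Summable.tsum_pos hFsum hnn (fun _ => 0) ((Real.exp_pos _).trans_le (hkey _))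
  have hsum_theta : ∑ β ∈ Bset g g0 hg, theta (fun i => ((β i : ℕ) : ℂ) / 2) τ
      = ((∑ β ∈ Bset g g0 hg, ∑' m, f β m : ℝ) : ℂ) := by
    rw [Complex.ofReal_sum]
    exact Finset.sum_congr rfl fun β _ => htheta β
  refine ⟨⟨?_, ?_⟩, ?_⟩
  · rw [hsum_theta]; exact Complex.ofReal_im _
  · rw [hsum_theta, Complex.ofReal_re, hswap]; exact hpos
  · have hex : ∃ β ∈ Bset g g0 hg, 0 < ∑' m, f β m := by
      by_contra h
      push_neg at h
      have h2 : ∑ β ∈ Bset g g0 hg, ∑' m, f β m ≤ 0 := Finset.sum_nonpos h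
      rw [hswap] at h2
      linarith
    obtain ⟨β, hβ, hβpos⟩ := hex
    exact ⟨β, hβ, by rw [htheta β]; exact Complex.ofReal_im _,
      by rw [htheta β, Complex.ofReal_re]; exact hβpos⟩
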